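/- Fix λ ≠ 0. A continuously differentiable covector field A : ℝ⁴ → ℝ⁴ satisfies the invariance conditions L_ξA = 0 for the five vector fields ξ = e₁, ξ = e₂, ξ = e₄, ξ = e₁₂ − e₁₄ = (−x²−x⁴, x¹, 0, −x¹) and ξ = e₂₄ + λe₃ = (0, x⁴, λ, x²) if and only if there exist constants K₁, K₂ ∈ ℝ such that for all x: A₁(x) = 0, A₂(x) = A₄(x) = K₁·e^{−x³/λ} and A₃(x) = K₂. (This is the class P₍₅,₆₎ for λ ≠ 0.) -/

import Mathlib

open Real

/-- Partial derivative of a scalar function on ℝ⁴ in the j-th coordinate direction. -/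
noncomputable def pd (j : Fin 4) (f : (Fin 4 → ℝ) → ℝ) (x : Fin 4 → ℝ) : ℝ :=
  fderiv ℝ f x (Pi.single j 1)

/-- The i-th component of the Lie derivative of the covector field A along
the vector field ξ at the point x:  Σ_j ξ^j ∂_j A_i + Σ_j A_j ∂_i ξ^j. -/
noncomputable def lieCov (ξ A : (Fin 4 → ℝ) → Fin 4 → ℝ) (x : Fin 4 → ℝ) (i : Fin 4) : ℝ :=
  (∑ j : Fin 4, ξ x j * pd j (fun y => A y i) x)
    + ∑ j : Fin 4, A x j * pd i (fun y => ξ y j) x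

/-- Invariance condition L_ξ A = 0 on all of ℝ⁴. -/
def PInvariant (ξ A : (Fin 4 → ℝ) → Fin 4 → ℝ) : Prop :=
  ∀ x i, lieCov ξ A x i = 0

/-- Invariance condition L_ξ A = 0 on a set M. -/
def PInvariantOn (ξ A : (Fin 4 → ℝ) → Fin 4 → ℝ) (M : Set (Fin 4 → ℝ)) : Prop :=
  ∀ x ∈ M, ∀ i, lieCov ξ A x i = 0

def e1 : (Fin 4 → ℝ) → Fin 4 → ℝ := fun _ => ![1, 0, 0, 0]
def e2 : (Fin 4 → ℝ) → Fin 4 → ℝ := fun _ => ![0, 1, 0, 0]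
def e3 : (Fin 4 → ℝ) → Fin 4 → ℝ := fun _ => ![0, 0, 1, 0]
def e4 : (Fin 4 → ℝ) → Fin 4 → ℝ := fun _ => ![0, 0, 0, 1]
def e12 : (Fin 4 → ℝ) → Fin 4 → ℝ := fun x => ![-x 1, x 0, 0, 0]
def e13 : (Fin 4 → ℝ) → Fin 4 → ℝ := fun x => ![x 2, 0, -x 0, 0]
def e23 : (Fin 4 → ℝ) → Fin 4 → ℝ := fun x => ![0, -x 2, x 1, 0]
def e14 : (Fin 4 → ℝ) → Fin 4 → ℝ := fun x => ![x 3, 0, 0, x 0]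
def e24 : (Fin 4 → ℝ) → Fin 4 → ℝ := fun x => ![0, x 3, 0, x 1]
def e34 : (Fin 4 → ℝ) → Fin 4 → ℝ := fun x => ![0, 0, x 3, x 2]

/- ### Auxiliary lemmas -/

lemma pd_hasFDerivAt {f : (Fin 4 → ℝ) → ℝ} {D : (Fin 4 → ℝ) →L[ℝ] ℝ} {x}
    (h : HasFDerivAt f D x) (j : Fin 4) : pd j f x = D (Pi.single j 1) := by
  rw [pd, h.fderiv]

@[simp] lemma pd_const (j : Fin 4) (c : ℝ) (x : Fin 4 → ℝ) :
    pd j (fun _ => c) x = 0 := by simp [pd]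

lemma hasF_coord (k : Fin 4) (x : Fin 4 → ℝ) :
    HasFDerivAt (fun y : Fin 4 → ℝ => y k)
      (ContinuousLinearMap.proj k : (Fin 4 → ℝ) →L[ℝ] ℝ) x :=
  (ContinuousLinearMap.proj k : (Fin 4 → ℝ) →L[ℝ] ℝ).hasFDerivAt

@[simp] lemma pd_coord (j k : Fin 4) (x : Fin 4 → ℝ) :
    pd j (fun y => y k) x = if k = j then 1 else 0 := by
  rw [pd_hasFDerivAt (hasF_coord k x)]
  simp [Pi.single_apply]

@[simp] lemma pd_neg_coord (j k : Fin 4) (x : Fin 4 → ℝ) :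
    pd j (fun y => -y k) x = if k = j then -1 else 0 := by
  rw [pd_hasFDerivAt (f := fun y => -y k) (hasF_coord k x).neg]
  simp [Pi.single_apply]
  split_ifs <;> simp

@[simp] lemma pd_m13 (j : Fin 4) (x : Fin 4 → ℝ) :
    pd j (fun y : Fin 4 → ℝ => -y 1 - y 3) x
      = (if (1 : Fin 4) = j then (-1:ℝ) else 0) - (if (3 : Fin 4) = j then 1 else 0) := by
  rw [pd_hasFDerivAt (f := fun y : Fin 4 → ℝ => -y 1 - y 3) ((hasF_coord 1 x).neg.sub (hasF_coord 3 x))]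
  simp [Pi.single_apply]
  split_ifs <;> simp

lemma single_decomp (v : Fin 4 → ℝ) : v = ∑ j, v j • (Pi.single j 1 : Fin 4 → ℝ) := by
  funext k
  simp [Finset.sum_apply, Pi.single_apply]

lemma clm_zero {D : (Fin 4 → ℝ) →L[ℝ] ℝ} (h : ∀ j, D (Pi.single j 1) = 0) : D = 0 := by
  ext v
  rw [show (v : Fin 4 → ℝ) = ∑ j, v j • (Pi.single j 1 : Fin 4 → ℝ) from single_decomp v,
    map_sum]
  simp [h]

lemma hasF_exp (K c : ℝ) (x : Fin 4 → ℝ) :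
    HasFDerivAt (fun y : Fin 4 → ℝ => K * Real.exp (-(y 2) / c))
      (-((K * (Real.exp (-(x 2) / c) * c⁻¹)) •
        (ContinuousLinearMap.proj 2 : (Fin 4 → ℝ) →L[ℝ] ℝ))) x := by
  have heq : (fun y : Fin 4 → ℝ => -(y 2) / c)
      = fun y => ((-(c⁻¹)) • (ContinuousLinearMap.proj 2 : (Fin 4 → ℝ) →L[ℝ] ℝ)) y := by
    funext y
    simp [div_eq_inv_mul]
  have h1 : HasFDerivAt (fun y : Fin 4 → ℝ => -(y 2) / c)
      ((-(c⁻¹)) • (ContinuousLinearMap.proj 2 : (Fin 4 → ℝ) →L[ℝ] ℝ)) x := by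
    rw [heq]
    exact ((-(c⁻¹)) • (ContinuousLinearMap.proj 2 : (Fin 4 → ℝ) →L[ℝ] ℝ)).hasFDerivAt
  simpa [smul_smul] using (h1.exp).const_mul K

@[simp] lemma pd_exp (j : Fin 4) (K c : ℝ) (x : Fin 4 → ℝ) :
    pd j (fun y : Fin 4 → ℝ => K * Real.exp (-(y 2) / c)) x
      = if (2 : Fin 4) = j then -(K * Real.exp (-(x 2) / c) * c⁻¹) else 0 := by
  rw [pd_hasFDerivAt (hasF_exp K c x)]
  simp [Pi.single_apply]
  split_ifs <;> ring

/-- Class P_{5,6} for λ ≠ 0. -/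
theorem class_P56_lambda_ne_zero (l : ℝ) (hl : l ≠ 0)
    (A : (Fin 4 → ℝ) → Fin 4 → ℝ) (hA : ContDiff ℝ 1 A) :
    (PInvariant e1 A ∧ PInvariant e2 A ∧ PInvariant e4 A ∧
      PInvariant (fun x => ![-x 1 - x 3, x 0, 0, -x 0]) A ∧
      PInvariant (fun x => ![0, x 3, l, x 1]) A) ↔
      ∃ K1 K2 : ℝ,
        ∀ x, A x 0 = 0 ∧ A x 1 = K1 * exp (-(x 2) / l) ∧
          A x 3 = K1 * exp (-(x 2) / l) ∧ A x 2 = K2 := by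
  constructor
  · rintro ⟨h1, h2, h4, h5, h6⟩
    have hdiff : ∀ i : Fin 4, Differentiable ℝ (fun y => A y i) :=
      fun i => (differentiable_pi.mp (hA.differentiable one_ne_zero)) i
    have hp0 : ∀ (i : Fin 4) (x : Fin 4 → ℝ), pd 0 (fun y => A y i) x = 0 := by
      intro i x
      simpa [lieCov, e1, Fin.sum_univ_four] using h1 x i
    have hp1 : ∀ (i : Fin 4) (x : Fin 4 → ℝ), pd 1 (fun y => A y i) x = 0 := by
      intro i x
      simpa [lieCov, e2, Fin.sum_univ_four] using h2 x i
    have hp3 : ∀ (i : Fin 4) (x : Fin 4 → ℝ), pd 3 (fun y => A y i) x = 0 := by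
      intro i x
      simpa [lieCov, e4, Fin.sum_univ_four] using h4 x i
    have hA13 : ∀ x, A x 1 = A x 3 := by
      intro x
      have := h5 x 0
      simp [lieCov, Fin.sum_univ_four, hp0, hp1, hp3] at this
      linarith
    have hA0 : ∀ x, A x 0 = 0 := by
      intro x
      have := h5 x 1
      simp [lieCov, Fin.sum_univ_four, hp0, hp1, hp3] at this
      linarith
    have hp2A2 : ∀ x : Fin 4 → ℝ, pd 2 (fun y => A y 2) x = 0 := by
      intro x
      have := h6 x 2
      simp [lieCov, Fin.sum_univ_four, hp0, hp1, hp3] at this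
      exact this.resolve_left hl
    have hode1 : ∀ x : Fin 4 → ℝ, l * pd 2 (fun y => A y 1) x + A x 3 = 0 := by
      intro x
      have := h6 x 1
      simp [lieCov, Fin.sum_univ_four, hp0, hp1, hp3] at this
      linarith
    -- A x 2 is constant
    have hA2const : ∀ x, A x 2 = A 0 2 := by
      intro x
      refine is_const_of_fderiv_eq_zero (hdiff 2) (fun z => ?_) x 0
      refine clm_zero (fun j => ?_)
      have hj : pd j (fun y => A y 2) z = 0 := by
        fin_cases j
        · exact hp0 2 z
        · exact hp1 2 z
        · exact hp2A2 z
        · exact hp3 2 z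
      exact hj
    -- the function A · 1 * exp(x₂/l) is constant
    have hg : ∀ x : Fin 4 → ℝ, A x 1 * Real.exp (x 2 / l) = A 0 1 := by
      intro x
      have hexp : Differentiable ℝ (fun y : Fin 4 → ℝ => Real.exp (y 2 / l)) := by
        have hc : Differentiable ℝ (fun y : Fin 4 → ℝ => y 2) :=
          fun y => (hasF_coord 2 y).differentiableAt
        have hdl : Differentiable ℝ (fun y : Fin 4 → ℝ => y 2 / l) := by
          have he : (fun y : Fin 4 → ℝ => y 2 / l) = fun y => y 2 * l⁻¹ := by
            funext y; rw [div_eq_mul_inv]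
          rw [he]
          exact hc.mul_const l⁻¹
        exact Real.differentiable_exp.comp hdl
      have hdg : Differentiable ℝ (fun y : Fin 4 → ℝ => A y 1 * Real.exp (y 2 / l)) :=
        (hdiff 1).mul hexp
      have hzero : ∀ z : Fin 4 → ℝ,
          fderiv ℝ (fun y : Fin 4 → ℝ => A y 1 * Real.exp (y 2 / l)) z = 0 := by
        intro z
        have hD : HasFDerivAt (fun y : Fin 4 → ℝ => A y 1)
            (fderiv ℝ (fun y : Fin 4 → ℝ => A y 1) z) z :=
          ((hdiff 1) z).hasFDerivAt
        have hE : HasFDerivAt (fun y : Fin 4 → ℝ => Real.exp (y 2 / l))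
            (Real.exp (z 2 / l) • (l⁻¹ • (ContinuousLinearMap.proj 2 : (Fin 4 → ℝ) →L[ℝ] ℝ))) z := by
          have h0 := (((l⁻¹ • (ContinuousLinearMap.proj 2 : (Fin 4 → ℝ) →L[ℝ] ℝ)).hasFDerivAt
            (x := z))).exp
          simpa [div_eq_inv_mul] using h0
        rw [HasFDerivAt.fderiv (f := fun y : Fin 4 → ℝ => A y 1 * Real.exp (y 2 / l)) (hD.mul hE)]
        refine clm_zero (fun j => ?_)
        have hval : fderiv ℝ (fun y : Fin 4 → ℝ => A y 1) z (Pi.single j 1)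
            = if (2 : Fin 4) = j then -(A z 1) / l else 0 := by
          have hkey : pd 2 (fun y => A y 1) z = -(A z 1) / l := by
            have h' := hode1 z
            have h13 := hA13 z
            field_simp
            linarith
          fin_cases j
          · simpa [pd] using hp0 1 z
          · simpa [pd] using hp1 1 z
          · simpa [pd] using hkey
          · simpa [pd] using hp3 1 z
        simp [hval, Pi.single_apply]
        split_ifs
        · field_simp
          ring
        · ring
      have hconst := is_const_of_fderiv_eq_zero hdg hzero x 0
      simpa using hconst
    refine ⟨A 0 1, A 0 2, fun x => ⟨hA0 x, ?_, ?_, hA2const x⟩⟩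
    · have e := hg x
      have hne := Real.exp_ne_zero (x 2 / l)
      rw [neg_div, Real.exp_neg]
      field_simp
      linarith
    · rw [← hA13 x]
      have e := hg x
      have hne := Real.exp_ne_zero (x 2 / l)
      rw [neg_div, Real.exp_neg]
      field_simp
      linarith
  · rintro ⟨K1, K2, h⟩
    have hA0 : (fun y => A y 0) = fun _ : Fin 4 → ℝ => (0:ℝ) := funext fun y => (h y).1
    have hA1 : (fun y => A y 1) = fun y : Fin 4 → ℝ => K1 * Real.exp (-(y 2) / l) :=
      funext fun y => (h y).2.1
    have hA3 : (fun y => A y 3) = fun y : Fin 4 → ℝ => K1 * Real.exp (-(y 2) / l) :=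
      funext fun y => (h y).2.2.1
    have hA2 : (fun y => A y 2) = fun _ : Fin 4 → ℝ => K2 := funext fun y => (h y).2.2.2
    refine ⟨?_, ?_, ?_, ?_, ?_⟩ <;> intro x i <;> fin_cases i <;>
        simp [lieCov, Fin.sum_univ_four, e1, e2, e4, hA0, hA1, hA2, hA3,
          (h x).1, (h x).2.1, (h x).2.2.1, (h x).2.2.2] <;>
      field_simp <;> ring
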